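/- arXiv:2202.07432 — 2 statements merged into one kernel-verified Lean document; each statement's English description precedes it below -/
import Mathlib

section
/- Let ρ > ε > 0 and let S : ℝ² → ℝ be a measurable function that is bounded, i.e. |S(u)| ≤ M for all u ∈ ℝ² and some M ≥ 0. Define the ganglionic activation field 𝒮 : ℝ² → ℝ by 𝒮(p) = ∫_{B(p,ρ−ε)} S dA − ∫_{B(p,ρ)∖B(p,ρ−ε)} S dA. Then 𝒮 is Lipschitz continuous: there exists L ≥ 0 such that |𝒮(p) − 𝒮(q)| ≤ L·‖p − q‖ for all p, q ∈ ℝ². -/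
/-!
Moving the centre of a ball of radius `r` by `d` changes the integral of a function bounded by
`C` by at most `C` times the measure of the symmetric difference of the two balls. That set lies
in two annuli of width `d`, of Haar measure `((r + d) ^ n - r ^ n) · μ(B(0, 1)) = O(d)` for
`d ≤ 1`, while for `d ≥ 1` the trivial bound `2 C μ(B(0, r))` suffices. The ganglionic field is
`2 ∫_{B(p, ρ - ε)} S - ∫_{B(p, ρ)} S`, a combination of two such Lipschitz functions.
-/

open MeasureTheory Metric Module
open scoped NNReal ENNReal

theorem LipschitzWith.of_dist_le_mul_of_dist_le {X Y : Type*} [PseudoMetricSpace X]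
    [PseudoMetricSpace Y] {g : X → Y} {K : ℝ≥0} {δ D : ℝ} (hδ : 0 < δ)
    (hloc : ∀ x y, dist x y ≤ δ → dist (g x) (g y) ≤ K * dist x y)
    (hD : ∀ x y, dist (g x) (g y) ≤ D) :
    LipschitzWith (max K (D / δ).toNNReal) g := by
  refine .of_dist_le_mul fun x y => ?_
  rcases le_or_gt (dist x y) δ with hxy | hxy
  · calc dist (g x) (g y) ≤ K * dist x y := hloc x y hxy
      _ ≤ _ := by gcongr; exact le_max_left _ _
  · have hD0 : 0 ≤ D := dist_nonneg.trans (hD x y)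
    calc dist (g x) (g y) ≤ D := hD x y
      _ ≤ D / δ * dist x y := by
        rw [div_mul_eq_mul_div, le_div_iff₀ hδ]; exact mul_le_mul_of_nonneg_left hxy.le hD0
      _ ≤ (D / δ).toNNReal * dist x y := by gcongr; exact Real.le_coe_toNNReal _
      _ ≤ _ := by gcongr; exact le_max_right _ _

theorem add_pow_sub_pow_le {r d : ℝ} (n : ℕ) (hr : 0 ≤ r) (hd : 0 ≤ d) :
    (r + d) ^ n - r ^ n ≤ d * n * (r + d) ^ (n - 1) := by
  calc (r + d) ^ n - r ^ n ≤ |(r + d) ^ n - r ^ n| := le_abs_self _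
    _ ≤ |r + d - r| * n * max |r + d| |r| ^ (n - 1) := abs_pow_sub_pow_le _ _ _
    _ = d * n * (r + d) ^ (n - 1) := by
      rw [add_sub_cancel_left, abs_of_nonneg hd, abs_of_nonneg (by positivity),
        abs_of_nonneg hr, max_eq_left (by linarith)]

section SetIntegral

variable {α F : Type*} [MeasurableSpace α] [NormedAddCommGroup F] [NormedSpace ℝ F]
  {μ : Measure α} {f : α → F} {s t : Set α} {C : ℝ}

theorem norm_setIntegral_sub_setIntegral_le (hf : AEStronglyMeasurable f μ)
    (hC : ∀ x, ‖f x‖ ≤ C) (hs : MeasurableSet s) (ht : MeasurableSet t)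
    (hμs : μ s < ∞) (hμt : μ t < ∞) :
    ‖∫ x in s, f x ∂μ - ∫ x in t, f x ∂μ‖ ≤ C * (μ.real (s \ t) + μ.real (t \ s)) := by
  have hint : ∀ u, μ u < ∞ → IntegrableOn f u μ := fun u hu =>
    Measure.integrableOn_of_bounded hu.ne hf (ae_of_all _ hC)
  have hsdiff : ∀ {u v : Set α}, μ u < ∞ → ‖∫ x in u \ v, f x ∂μ‖ ≤ C * μ.real (u \ v) :=
    fun hu => norm_setIntegral_le_of_norm_le_const
      ((measure_mono Set.sdiff_subset).trans_lt hu) fun x _ => hC x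
  rw [← integral_inter_add_sdiff ht (hint s hμs), ← integral_inter_add_sdiff hs (hint t hμt),
    Set.inter_comm t s, add_sub_add_left_eq_sub, mul_add]
  exact (norm_sub_le _ _).trans (add_le_add (hsdiff hμs) (hsdiff hμt))

end SetIntegral

section AddHaar

variable {E F : Type*} [NormedAddCommGroup E] [NormedSpace ℝ E] [MeasurableSpace E]
  [BorelSpace E] [FiniteDimensional ℝ E] (μ : Measure E) [μ.IsAddHaarMeasure]
  [NormedAddCommGroup F] [NormedSpace ℝ F]

theorem measureReal_closedBall_sdiff_closedBall_le {r : ℝ} (hr : 0 ≤ r) (p q : E) :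
    μ.real (closedBall p r \ closedBall q r) ≤
      ((r + dist p q) ^ finrank ℝ E - r ^ finrank ℝ E) * μ.real (closedBall 0 1) := by
  have hsub : closedBall p r \ closedBall q r ⊆ closedBall q (r + dist p q) \ closedBall q r :=
    Set.sdiff_subset_sdiff_left (closedBall_subset_closedBall' le_rfl)
  have hballs : closedBall q r ⊆ closedBall q (r + dist p q) :=
    closedBall_subset_closedBall (le_add_of_nonneg_right dist_nonneg)
  calc μ.real (closedBall p r \ closedBall q r)
      ≤ μ.real (closedBall q (r + dist p q) \ closedBall q r) :=
        measureReal_mono hsub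
          ((measure_mono Set.sdiff_subset).trans_lt measure_closedBall_lt_top).ne
    _ = _ := by
      rw [measureReal_sdiff hballs measurableSet_closedBall measure_closedBall_lt_top.ne,
        Measure.addHaar_real_closedBall' μ q (by positivity),
        Measure.addHaar_real_closedBall' μ q hr, sub_mul]

theorem lipschitzWith_setIntegral_closedBall {f : E → F} {C r : ℝ}
    (hf : AEStronglyMeasurable f μ) (hC : ∀ x, ‖f x‖ ≤ C) (hr : 0 ≤ r) :
    ∃ K, LipschitzWith K fun p => ∫ x in closedBall p r, f x ∂μ := by
  set n := finrank ℝ E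
  set c := μ.real (closedBall (0 : E) 1)
  have hC0 : 0 ≤ C := (norm_nonneg _).trans (hC 0)
  have hc0 : 0 ≤ c := measureReal_nonneg
  have hball (p : E) : ‖∫ x in closedBall p r, f x ∂μ‖ ≤ C * (r ^ n * c) := by
    rw [← Measure.addHaar_real_closedBall' μ p hr]
    exact norm_setIntegral_le_of_norm_le_const measure_closedBall_lt_top fun x _ => hC x
  have hnear (p q : E) (hpq : dist p q ≤ 1) :
      dist (∫ x in closedBall p r, f x ∂μ) (∫ x in closedBall q r, f x ∂μ) ≤
        2 * C * (n * (r + 1) ^ (n - 1) * c) * dist p q := by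
    rw [dist_eq_norm]
    calc _ ≤ C * (μ.real (closedBall p r \ closedBall q r) +
            μ.real (closedBall q r \ closedBall p r)) :=
          norm_setIntegral_sub_setIntegral_le hf hC measurableSet_closedBall
            measurableSet_closedBall measure_closedBall_lt_top measure_closedBall_lt_top
      _ ≤ C * (2 * (((r + dist p q) ^ n - r ^ n) * c)) := by
          rw [two_mul]
          gcongr
          · exact measureReal_closedBall_sdiff_closedBall_le μ hr p q
          · exact dist_comm p q ▸ measureReal_closedBall_sdiff_closedBall_le μ hr q p
      _ ≤ C * (2 * (dist p q * n * (r + 1) ^ (n - 1) * c)) := by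
          gcongr
          exact (add_pow_sub_pow_le n hr dist_nonneg).trans (by gcongr)
      _ = 2 * C * (n * (r + 1) ^ (n - 1) * c) * dist p q := by ring
  refine ⟨_, LipschitzWith.of_dist_le_mul_of_dist_le
    (K := (2 * C * (n * (r + 1) ^ (n - 1) * c)).toNNReal) (D := 2 * (C * (r ^ n * c))) one_pos
    (fun p q hpq => (hnear p q hpq).trans ?_) fun p q => ?_⟩
  · gcongr; exact Real.le_coe_toNNReal _
  · rw [dist_eq_norm, two_mul]
    exact (norm_sub_le _ _).trans (add_le_add (hball p) (hball q))

end AddHaar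

theorem ganglionic_field_lipschitz_general
    (ρ ε : ℝ) (hε : 0 < ε) (hρ : ε < ρ)
    (S : EuclideanSpace ℝ (Fin 2) → ℝ) (hS : Measurable S)
    (M : ℝ) (hbd : ∀ u, |S u| ≤ M) :
    ∃ L : ℝ, 0 ≤ L ∧ ∀ p q : EuclideanSpace ℝ (Fin 2),
      |((∫ u in closedBall p (ρ - ε), S u) -
          ∫ u in closedBall p ρ \ closedBall p (ρ - ε), S u) -
        ((∫ u in closedBall q (ρ - ε), S u) -
          ∫ u in closedBall q ρ \ closedBall q (ρ - ε), S u)|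
        ≤ L * ‖p - q‖ := by
  obtain ⟨K₁, h₁⟩ := lipschitzWith_setIntegral_closedBall volume hS.aestronglyMeasurable hbd
    (sub_nonneg.2 hρ.le)
  obtain ⟨K₂, h₂⟩ :=
    lipschitzWith_setIntegral_closedBall volume hS.aestronglyMeasurable hbd (hε.trans hρ).le
  refine ⟨K₁ + (K₂ + K₁), by positivity, fun p q => ?_⟩
  have hannulus (x : EuclideanSpace ℝ (Fin 2)) :
      ∫ u in closedBall x ρ \ closedBall x (ρ - ε), S u =
        (∫ u in closedBall x ρ, S u) - ∫ u in closedBall x (ρ - ε), S u :=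
    setIntegral_sdiff measurableSet_closedBall
      (Measure.integrableOn_of_bounded measure_closedBall_lt_top.ne hS.aestronglyMeasurable
        (ae_of_all _ hbd))
      (closedBall_subset_closedBall (by linarith))
  simpa only [hannulus, dist_eq_norm, Real.norm_eq_abs, NNReal.coe_add] using
    (h₁.sub (h₂.sub h₁)).dist_le_mul p q

/-- **Lipschitz continuity of the ganglionic activation field.**
Let `ρ > ε > 0` and let `S : ℝ² → ℝ` be measurable and bounded by `M ≥ 0`.
The center-surround field
`𝒮 p = ∫_{B(p,ρ−ε)} S − ∫_{B(p,ρ)∖B(p,ρ−ε)} S` is Lipschitz continuous. -/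
theorem ganglionic_field_lipschitz
    (ρ ε : ℝ) (hε : 0 < ε) (hρ : ε < ρ)
    (S : EuclideanSpace ℝ (Fin 2) → ℝ) (hS : Measurable S)
    (M : ℝ) (hM : 0 ≤ M) (hbd : ∀ u, |S u| ≤ M) :
    ∃ L : ℝ, 0 ≤ L ∧ ∀ p q : EuclideanSpace ℝ (Fin 2),
      |((∫ u in closedBall p (ρ - ε), S u) -
          ∫ u in closedBall p ρ \ closedBall p (ρ - ε), S u) -
        ((∫ u in closedBall q (ρ - ε), S u) -
          ∫ u in closedBall q ρ \ closedBall q (ρ - ε), S u)|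
        ≤ L * ‖p - q‖ :=
  ganglionic_field_lipschitz_general ρ ε hε hρ S hS M hbd
end

section
/- Let r > 0. For all p, q ∈ ℝ², the two-dimensional Lebesgue measure of the symmetric difference of the two balls of radius r centered at p and q satisfies vol(B(p,r) Δ B(q,r)) ≤ 2πr·‖p − q‖. -/
open MeasureTheory Metric

lemma volume_closedBall_fin_two (x : EuclideanSpace ℝ (Fin 2)) (s : ℝ) (hs : 0 ≤ s) :
    volume (closedBall x s) = ENNReal.ofReal (Real.pi * s ^ 2) := by
  rw [EuclideanSpace.volume_closedBall]
  have h2 : (Fintype.card (Fin 2) : ℝ) = 2 := by simp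
  rw [Fintype.card_fin]
  have : Real.Gamma ((2 : ℕ) / 2 + 1) = 1 := by
    norm_num [Real.Gamma_two]
  rw [this]
  have hsq : Real.sqrt Real.pi ^ 2 = Real.pi := Real.sq_sqrt Real.pi_pos.le
  rw [hsq, div_one, ← ENNReal.ofReal_pow hs, ← ENNReal.ofReal_mul (by positivity)]
  ring_nf

/-- The area of the symmetric difference of two discs of radius `r` in the plane is
at most `2πr` times the distance between their centers. -/
theorem volume_symmDiff_closedBall_le
    (r : ℝ) (hr : 0 < r) (p q : EuclideanSpace ℝ (Fin 2)) :
    (volume (symmDiff (closedBall p r) (closedBall q r))).toReal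
      ≤ 2 * Real.pi * r * ‖p - q‖ := by
  set d : ℝ := ‖p - q‖ with hd
  have hd0 : 0 ≤ d := norm_nonneg _
  have hdist : dist p q = d := by rw [dist_eq_norm]
  have hvolA : volume (closedBall p r) = ENNReal.ofReal (Real.pi * r ^ 2) :=
    volume_closedBall_fin_two p r hr.le
  have hvolB : volume (closedBall q r) = ENNReal.ofReal (Real.pi * r ^ 2) :=
    volume_closedBall_fin_two q r hr.le
  have hsd : symmDiff (closedBall p r) (closedBall q r)
      = (closedBall p r \ closedBall q r) ∪ (closedBall q r \ closedBall p r) :=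
    Set.symmDiff_def _ _
  rcases le_or_gt d (2 * r) with hcase | hcase
  · -- small distance: use the common inscribed ball
    set m : EuclideanSpace ℝ (Fin 2) := midpoint ℝ p q with hm
    have hs : (0 : ℝ) ≤ r - d / 2 := by linarith
    have hmp : dist m p = d / 2 := by
      rw [dist_comm, hm, dist_left_midpoint (𝕜 := ℝ), hdist]
      norm_num
      ring
    have hmq : dist m q = d / 2 := by
      rw [dist_comm, hm, dist_right_midpoint (𝕜 := ℝ), hdist]
      norm_num
      ring
    have hsubA : closedBall m (r - d / 2) ⊆ closedBall p r := by
      intro x hx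
      rw [mem_closedBall] at hx ⊢
      calc dist x p ≤ dist x m + dist m p := dist_triangle _ _ _
        _ ≤ (r - d / 2) + d / 2 := by rw [hmp]; linarith
        _ = r := by ring
    have hsubB : closedBall m (r - d / 2) ⊆ closedBall q r := by
      intro x hx
      rw [mem_closedBall] at hx ⊢
      calc dist x q ≤ dist x m + dist m q := dist_triangle _ _ _
        _ ≤ (r - d / 2) + d / 2 := by rw [hmq]; linarith
        _ = r := by ring
    have hmono : 0 ≤ Real.pi * r ^ 2 - Real.pi * (r - d / 2) ^ 2 := by
      nlinarith [mul_nonneg (mul_nonneg Real.pi_pos.le hd0) hs,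
        mul_nonneg (mul_nonneg Real.pi_pos.le hd0) hd0]
    have hvolS : volume (closedBall m (r - d / 2))
        = ENNReal.ofReal (Real.pi * (r - d / 2) ^ 2) :=
      volume_closedBall_fin_two m (r - d / 2) hs
    have hdiffA : volume (closedBall p r \ closedBall m (r - d / 2))
        = ENNReal.ofReal (Real.pi * r ^ 2 - Real.pi * (r - d / 2) ^ 2) := by
      rw [measure_diff hsubA measurableSet_closedBall.nullMeasurableSet
          (by rw [hvolS]; exact ENNReal.ofReal_ne_top), hvolA, hvolS,
        ENNReal.ofReal_sub _ (by positivity)]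
    have hdiffB : volume (closedBall q r \ closedBall m (r - d / 2))
        = ENNReal.ofReal (Real.pi * r ^ 2 - Real.pi * (r - d / 2) ^ 2) := by
      rw [measure_diff hsubB measurableSet_closedBall.nullMeasurableSet
          (by rw [hvolS]; exact ENNReal.ofReal_ne_top), hvolB, hvolS,
        ENNReal.ofReal_sub _ (by positivity)]
    have hsub : symmDiff (closedBall p r) (closedBall q r)
        ⊆ (closedBall p r \ closedBall m (r - d / 2))
          ∪ (closedBall q r \ closedBall m (r - d / 2)) := by
      rw [hsd]
      apply Set.union_subset_union
      · exact Set.diff_subset_diff_right hsubB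
      · exact Set.diff_subset_diff_right hsubA
    have hle : volume (symmDiff (closedBall p r) (closedBall q r))
        ≤ ENNReal.ofReal (2 * (Real.pi * r ^ 2 - Real.pi * (r - d / 2) ^ 2)) := by
      calc volume (symmDiff (closedBall p r) (closedBall q r))
          ≤ volume ((closedBall p r \ closedBall m (r - d / 2))
              ∪ (closedBall q r \ closedBall m (r - d / 2))) := measure_mono hsub
        _ ≤ volume (closedBall p r \ closedBall m (r - d / 2))
              + volume (closedBall q r \ closedBall m (r - d / 2)) := measure_union_le _ _
        _ = ENNReal.ofReal (2 * (Real.pi * r ^ 2 - Real.pi * (r - d / 2) ^ 2)) := by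
            rw [hdiffA, hdiffB, ← ENNReal.ofReal_add hmono hmono]
            ring_nf
    have h2 : 2 * (Real.pi * r ^ 2 - Real.pi * (r - d / 2) ^ 2) ≤ 2 * Real.pi * r * d := by
      nlinarith [mul_nonneg Real.pi_pos.le (sq_nonneg d)]
    exact (ENNReal.toReal_le_of_le_ofReal (by positivity)
      (hle.trans (ENNReal.ofReal_le_ofReal h2)))
  · -- large distance: bound by the total area of the two discs
    have hle : volume (symmDiff (closedBall p r) (closedBall q r))
        ≤ ENNReal.ofReal (2 * (Real.pi * r ^ 2)) := by
      calc volume (symmDiff (closedBall p r) (closedBall q r))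
          ≤ volume (closedBall p r \ closedBall q r)
              + volume (closedBall q r \ closedBall p r) := by
            rw [hsd]; exact measure_union_le _ _
        _ ≤ volume (closedBall p r) + volume (closedBall q r) :=
            add_le_add (measure_mono Set.diff_subset) (measure_mono Set.diff_subset)
        _ = ENNReal.ofReal (2 * (Real.pi * r ^ 2)) := by
            rw [hvolA, hvolB, ← ENNReal.ofReal_add (by positivity) (by positivity)]
            ring_nf
    have h2 : 2 * (Real.pi * r ^ 2) ≤ 2 * Real.pi * r * d := by
      nlinarith [mul_nonneg (mul_nonneg Real.pi_pos.le hr.le)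
        (by linarith : (0:ℝ) ≤ d - r)]
    exact (ENNReal.toReal_le_of_le_ofReal (by positivity)
      (hle.trans (ENNReal.ofReal_le_ofReal h2)))
end
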